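/- arXiv:2412.03101 — 2 statements merged into one kernel-verified Lean document; each statement's English description precedes it below -/
import Mathlib

section
/- Let w, c be real numbers with c > 0 and 0 < w < c + 1, and let A = [[w-1, -c],[w, -c]]. Then the symmetric matrix P = (1/(2c(1+c-w))) · [[c + c^2 + w^2, -c^2 + w - w^2],[-c^2 + w - w^2, 1 + c + c^2 - 2w + w^2]] satisfies the Lyapunov equation P A + Aᵀ P = -I. -/
open Matrix

def psoMatrix {R : Type*} [Ring R] (w c : R) : Matrix (Fin 2) (Fin 2) R :=
  !![w - 1, -c; w, -c]

/-- `2 c (1 + c - w)` times the Lyapunov matrix `P`; clearing the denominator makes the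
Lyapunov equation a polynomial identity over any commutative ring. -/
def psoLyapunovNumerator {R : Type*} [Ring R] (w c : R) : Matrix (Fin 2) (Fin 2) R :=
  !![c + c ^ 2 + w ^ 2, -c ^ 2 + w - w ^ 2;
     -c ^ 2 + w - w ^ 2, 1 + c + c ^ 2 - 2 * w + w ^ 2]

theorem isSymm_of_fin_two {α : Type*} (a b d : α) : (!![a, b; b, d]).IsSymm :=
  IsSymm.ext fun i j => by fin_cases i <;> fin_cases j <;> rfl

theorem psoLyapunovNumerator_mul_add_transpose_mul {R : Type*} [CommRing R] (w c : R) :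
    psoLyapunovNumerator w c * psoMatrix w c + (psoMatrix w c)ᵀ * psoLyapunovNumerator w c =
      (-(2 * c * (1 + c - w))) • (1 : Matrix (Fin 2) (Fin 2) R) := by
  ext i j
  fin_cases i <;> fin_cases j <;>
    simp [psoLyapunovNumerator, psoMatrix, mul_apply, Fin.sum_univ_two] <;> ring

theorem stmt1_general (w c : ℝ) (hc : 0 < c) (hw1 : w < c + 1) :
    let A : Matrix (Fin 2) (Fin 2) ℝ := !![w - 1, -c; w, -c]
    let P : Matrix (Fin 2) (Fin 2) ℝ :=
      (1 / (2 * c * (1 + c - w))) •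
        !![c + c ^ 2 + w ^ 2, -c ^ 2 + w - w ^ 2;
           -c ^ 2 + w - w ^ 2, 1 + c + c ^ 2 - 2 * w + w ^ 2]
    P.IsSymm ∧ P * A + Aᵀ * P = -1 := by
  intro A P
  have hd : 2 * c * (1 + c - w) ≠ 0 := by
    have : 0 < 1 + c - w := by linarith
    positivity
  refine ⟨(isSymm_of_fin_two _ _ _).smul _, ?_⟩
  change (1 / (2 * c * (1 + c - w))) • psoLyapunovNumerator w c * psoMatrix w c +
      (psoMatrix w c)ᵀ * ((1 / (2 * c * (1 + c - w))) • psoLyapunovNumerator w c) = -1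
  rw [Matrix.smul_mul, Matrix.mul_smul, ← smul_add, psoLyapunovNumerator_mul_add_transpose_mul,
    smul_smul, one_div_mul_eq_div, neg_div, div_self hd, neg_smul, one_smul]

theorem stmt1 (w c : ℝ) (hc : 0 < c) (hw0 : 0 < w) (hw1 : w < c + 1) :
    let A : Matrix (Fin 2) (Fin 2) ℝ := !![w - 1, -c; w, -c]
    let P : Matrix (Fin 2) (Fin 2) ℝ :=
      (1 / (2 * c * (1 + c - w))) •
        !![c + c ^ 2 + w ^ 2, -c ^ 2 + w - w ^ 2;
           -c ^ 2 + w - w ^ 2, 1 + c + c ^ 2 - 2 * w + w ^ 2]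
    P.IsSymm ∧ P * A + Aᵀ * P = -1 :=
  stmt1_general w c hc hw1
end

section
/- Let w, c > 0 with 0 < w < c + 1, and let P be the unique symmetric solution of P A + Aᵀ P = -I for A = [[w-1, -c],[w, -c]]. If the largest eigenvalue of P satisfies λ_max(P) < 1/(2·sqrt(c² + w²)), then for any perturbation Δ(y) = (0, ε)ᵀ with |ε| ≤ |w v - c x| for y = (v, x)ᵀ, the derivative of V(y) = yᵀ P y along trajectories of ẏ = A y + Δ(y) satisfies V̇(y) ≤ (2 sqrt(c²+w²) λ_max(P) - 1) ‖y‖₂² < 0 for all y ≠ 0. -/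
open Matrix

private lemma aux_quad (a b d lmax : ℝ)
    (h : ∀ p q : ℝ, p^2 + q^2 = 1 → a*p^2 + 2*b*p*q + d*q^2 ≤ lmax) :
    ∀ p q : ℝ, a*p^2 + 2*b*p*q + d*q^2 ≤ lmax*(p^2+q^2) := by
  intro p q
  rcases eq_or_lt_of_le (by positivity : (0:ℝ) ≤ p^2+q^2) with h0 | hn
  · have hp : p = 0 := by nlinarith [sq_nonneg p, sq_nonneg q]
    have hq : q = 0 := by nlinarith [sq_nonneg p, sq_nonneg q]
    simp [hp, hq]
  · have hrpos : 0 < Real.sqrt (p^2+q^2) := Real.sqrt_pos.mpr hn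
    set r := Real.sqrt (p^2+q^2) with hrdef
    have hr2 : r^2 = p^2+q^2 := Real.sq_sqrt hn.le
    have hu : (p/r)^2 + (q/r)^2 = 1 := by
      field_simp
      linear_combination -hr2
    have h3 := mul_le_mul_of_nonneg_left (h (p/r) (q/r) hu) (by positivity : (0:ℝ) ≤ r^2)
    have h2 : r^2 * (a*(p/r)^2 + 2*b*(p/r)*(q/r) + d*(q/r)^2)
        = a*p^2 + 2*b*p*q + d*q^2 := by
      field_simp
    rw [h2, hr2] at h3
    linarith
private lemma aux_hbd (a b d lmax : ℝ)
    (hg : ∀ p q : ℝ, a*p^2 + 2*b*p*q + d*q^2 ≤ lmax*(p^2+q^2))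
    (h1 : a ≤ lmax) (h2 : d ≤ lmax) : b^2 ≤ (lmax - a)*(lmax - d) := by
  by_cases hb0 : b = 0
  · rw [hb0]
    simpa using mul_nonneg (sub_nonneg.2 h1) (sub_nonneg.2 h2)
  · have hp : 0 < lmax - a := by
      rcases eq_or_lt_of_le h1 with heq | hlt
      · exfalso
        have hb2 : 0 < b^2 := by positivity
        have htt := hg (b*((lmax - d + 1)/(2*b^2))) 1
        have hts : 2*b^2*((lmax - d + 1)/(2*b^2)) = lmax - d + 1 := by
          field_simp
        nlinarith [htt, hts, sq_nonneg (b*((lmax - d + 1)/(2*b^2)))]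
      · linarith
    have h3 := hg b (lmax - a)
    nlinarith [h3, hp]
private lemma aux_T (S lmax b d w c v x ε : ℝ) (hSpos : 0 < S) (hS2 : S^2 = c^2+w^2)
    (hl0 : 0 ≤ lmax) (hb2d2 : b^2 + d^2 ≤ lmax^2) (habs : |ε| ≤ |w*v - c*x|) :
    ε*(b*v + d*x) ≤ S*lmax*(v^2+x^2) := by
  have hn0 : 0 ≤ v^2 + x^2 := by positivity
  have hε2 : ε^2 ≤ (w*v - c*x)^2 := by
    have := pow_le_pow_left₀ (abs_nonneg ε) habs 2
    simpa [sq_abs] using this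
  have hwx : (w*v - c*x)^2 ≤ (c^2+w^2)*(v^2+x^2) := by nlinarith [sq_nonneg (w*x + c*v)]
  have hpy : (b*v + d*x)^2 ≤ lmax^2 * (v^2+x^2) := by
    nlinarith [sq_nonneg (b*x - d*v), mul_le_mul_of_nonneg_right hb2d2 hn0]
  have hε2' : ε^2 ≤ S^2*(v^2+x^2) := by rw [hS2]; linarith
  have hsq : (ε*(b*v + d*x))^2 ≤ (S*lmax*(v^2+x^2))^2 := by
    have := mul_le_mul hε2' hpy (sq_nonneg _) (by positivity)
    calc (ε*(b*v + d*x))^2 = ε^2 * (b*v+d*x)^2 := by ring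
      _ ≤ S^2*(v^2+x^2) * (lmax^2*(v^2+x^2)) := this
      _ = (S*lmax*(v^2+x^2))^2 := by ring
  nlinarith [hsq, mul_nonneg (mul_nonneg hSpos.le hl0) hn0]
private lemma aux_b2d2 (a b d lmax : ℝ) (hapos : 0 < a) (hdpos : 0 < d)
    (h2 : d ≤ lmax) (hbd : b^2 ≤ (lmax - a)*(lmax - d)) : b^2 + d^2 ≤ lmax^2 := by
  nlinarith [hbd, mul_nonneg hapos.le (sub_nonneg.2 h2), mul_nonneg hdpos.le (sub_nonneg.2 h2)]
private lemma aux_apos (w c a : ℝ) (hw : 0 < w) (hc : 0 < c) (hwc : w < c + 1)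
    (ha : a * (2*c*(c+1-w)) = c + c^2 + w^2) : 0 < a := by
  have hK : 0 < 2*c*(c+1-w) := by nlinarith
  nlinarith
private lemma aux_dpos (w c d : ℝ) (hw : 0 < w) (hc : 0 < c) (hwc : w < c + 1)
    (hd : d * (2*c*(c+1-w)) = w^2 - 2*w + 1 + c + c^2) : 0 < d := by
  have hK : 0 < 2*c*(c+1-w) := by nlinarith
  nlinarith [sq_nonneg (w-1)]

theorem stmt2 (w c : ℝ) (hw : 0 < w) (hc : 0 < c) (hwc : w < c + 1)
    (P : Matrix (Fin 2) (Fin 2) ℝ) (hPsymm : P.IsSymm)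
    (hLyap : P * !![w - 1, -c; w, -c] + (!![w - 1, -c; w, -c])ᵀ * P = -1)
    (lmax : ℝ)
    (hlmax : IsGreatest {r : ℝ | ∃ u : Fin 2 → ℝ, u ⬝ᵥ u = 1 ∧ r = u ⬝ᵥ (P *ᵥ u)} lmax)
    (hbound : lmax < 1 / (2 * Real.sqrt (c ^ 2 + w ^ 2))) :
    ∀ v x ε : ℝ, |ε| ≤ |w * v - c * x| →
      2 * (![v, x] ⬝ᵥ (P *ᵥ (!![w - 1, -c; w, -c] *ᵥ ![v, x] + ![0, ε]))) ≤
        (2 * Real.sqrt (c ^ 2 + w ^ 2) * lmax - 1) * (![v, x] ⬝ᵥ ![v, x]) ∧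
      (![v, x] ≠ 0 →
        (2 * Real.sqrt (c ^ 2 + w ^ 2) * lmax - 1) * (![v, x] ⬝ᵥ ![v, x]) < 0) := by
  obtain ⟨a, hA⟩ : ∃ y, P 0 0 = y := ⟨_, rfl⟩
  obtain ⟨b, hB⟩ : ∃ y, P 0 1 = y := ⟨_, rfl⟩
  obtain ⟨d, hD⟩ : ∃ y, P 1 1 = y := ⟨_, rfl⟩
  have hsym : P 1 0 = b := by
    have := congrFun (congrFun hPsymm 0) 1
    simp only [Matrix.transpose_apply] at this
    rw [← hB, this]
  -- extract scalar Lyapunov equations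
  rw [show (!![w-1,-c;w,-c])ᵀ = !![w-1,w;-c,-c] from by
    ext i j; fin_cases i <;> fin_cases j <;> rfl] at hLyap
  have h00 := congrFun (congrFun hLyap 0) 0
  have h01 := congrFun (congrFun hLyap 0) 1
  have h11 := congrFun (congrFun hLyap 1) 1
  simp only [Matrix.add_apply, Matrix.mul_apply, Fin.sum_univ_two, Matrix.neg_apply,
    Matrix.one_apply, Matrix.cons_val', Matrix.cons_val_zero, Matrix.cons_val_one,
    Matrix.head_cons, Matrix.empty_val', Matrix.cons_val_fin_one, Matrix.head_fin_const,
    Matrix.vecHead, Matrix.vecTail, hA, hB, hD, hsym] at h00 h01 h11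
  norm_num at h00 h01 h11
  -- explicit entries
  have ha : a * (2*c*(c+1-w)) = c + c^2 + w^2 := by
    linear_combination (-(c*(1+c))) * h00 - (2*w*c) * h01 - w^2 * h11
  have hb' : w * (b * (2*c*(c+1-w))) = w * (w - w^2 - c^2) := by
    linear_combination (c*(c+1-w)) * h00 - (w-1) * ha
  have hb : b * (2*c*(c+1-w)) = w - w^2 - c^2 := mul_left_cancel₀ (ne_of_gt hw) hb'
  have hd : d * (2*c*(c+1-w)) = w^2 - 2*w + 1 + c + c^2 := by
    linear_combination (-(c+1-w)) * h11 - hb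
  have hapos : 0 < a := aux_apos w c a hw hc hwc ha
  have hdpos : 0 < d := aux_dpos w c d hw hc hwc hd
  -- quadratic form bound
  have key : ∀ u : Fin 2 → ℝ, u ⬝ᵥ u = 1 → u ⬝ᵥ (P *ᵥ u) ≤ lmax := fun u hu => hlmax.2 ⟨u, hu, rfl⟩
  have keyu : ∀ p q : ℝ, p^2 + q^2 = 1 → a*p^2 + 2*b*p*q + d*q^2 ≤ lmax := by
    intro p q hpq
    have hu : (![p, q] : Fin 2 → ℝ) ⬝ᵥ ![p, q] = 1 := by
      simp only [dotProduct, Fin.sum_univ_two, Matrix.cons_val_zero, Matrix.cons_val_one,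
        Matrix.head_cons]
      linear_combination hpq
    have h := key _ hu
    simp only [Matrix.mulVec, dotProduct, Fin.sum_univ_two, Matrix.cons_val_zero,
      Matrix.cons_val_one, Matrix.head_cons, hA, hB, hD, hsym] at h
    have he : a*p^2 + 2*b*p*q + d*q^2 = p * (a*p + b*q) + q * (b*p + d*q) := by ring
    rw [he]
    exact h
  have keyg := aux_quad a b d lmax keyu
  have h1 : a ≤ lmax := by have := keyg 1 0; linarith
  have h2 : d ≤ lmax := by have := keyg 0 1; linarith
  have hl0 : 0 ≤ lmax := le_trans hdpos.le h2
  have hbd := aux_hbd a b d lmax keyg h1 h2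
  have hb2d2 := aux_b2d2 a b d lmax hapos hdpos h2 hbd
  have hS2 : Real.sqrt (c^2+w^2)^2 = c^2+w^2 := Real.sq_sqrt (by positivity)
  have hSpos : 0 < Real.sqrt (c^2+w^2) := Real.sqrt_pos.mpr (by positivity)
  set S := Real.sqrt (c^2+w^2) with hSdef
  have hSl : 2*S*lmax < 1 := by
    have h2S : 0 < 2*S := by linarith
    have := (lt_div_iff₀ h2S).mp hbound
    linarith
  intro v x ε habs
  have hT := aux_T S lmax b d w c v x ε hSpos hS2 hl0 hb2d2 habs
  have hdot : (![v, x] : Fin 2 → ℝ) ⬝ᵥ ![v, x] = v^2 + x^2 := by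
    simp only [dotProduct, Fin.sum_univ_two, Matrix.cons_val_zero, Matrix.cons_val_one,
      Matrix.head_cons]
    ring
  constructor
  · have hVdot : 2 * (![v, x] ⬝ᵥ (P *ᵥ (!![w - 1, -c; w, -c] *ᵥ ![v, x] + ![0, ε]))) =
        -(v^2+x^2) + 2*(ε*(b*v + d*x)) := by
      simp [Matrix.mulVec, dotProduct, Fin.sum_univ_two, hA, hB, hD, hsym]
      linear_combination v^2 * h00 + 2*v*x * h01 + x^2 * h11
    rw [hVdot, hdot]
    linarith [hT]
  · intro hy
    have hvx : v ≠ 0 ∨ x ≠ 0 := by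
      by_contra h
      push_neg at h
      exact hy (by ext i; fin_cases i <;> simp [h.1, h.2])
    have hnpos : 0 < v^2 + x^2 := by
      rcases hvx with h | h <;> positivity
    rw [hdot]
    exact mul_neg_of_neg_of_pos (by linarith) hnpos
end
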